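/- arXiv:2406.11620 — 4 statements merged into one kernel-verified Lean document; each statement's English description precedes it below -/
import Mathlib

section
/- Fix natural numbers n and m ≥ 1, and let A be the adjacency matrix over ℂ of the (n, m) Hamming graph. Then for all t ∈ ℝ and all vertices u, v with Hamming distance d = H(u, v), the (u, v) entry of the continuous-time quantum walk operator has the closed form (exp(−i t A))_{u,v} = ((−1)^d / m^n) · e^{−i t n (m−1)} · (e^{i t m} − 1)^d · (1 + (m−1) e^{i t m})^{n−d}. -/
open Finset Matrix NormedSpace

/-- The `(n, m)` Hamming graph: vertices are tuples `Fin n → Fin m`, with two tuples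
adjacent iff their Hamming distance is `1`. -/
def hammingGraph (n m : ℕ) : SimpleGraph (Fin n → Fin m) where
  Adj u v := hammingDist u v = 1
  symm := by
    constructor
    intro u v h
    rwa [hammingDist_comm]
  loopless := by
    constructor
    intro u h
    rw [hammingDist_self] at h
    exact one_ne_zero h.symm

instance (n m : ℕ) : DecidableRel (hammingGraph n m).Adj :=
  fun u v => inferInstanceAs (Decidable (hammingDist u v = 1))

noncomputable def hamM (n m : ℕ) (g : Fin n → Fin m → Fin m → ℂ) (S : Finset (Fin n)) :
    Matrix (Fin n → Fin m) (Fin n → Fin m) ℂ :=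
  Matrix.of fun u v => (∏ k ∈ S, g k (u k) (v k)) * ∏ j ∈ Sᶜ, (if u j = v j then (1:ℂ) else 0)

lemma hamM_step (n m : ℕ) (g : Fin n → Fin m → Fin m → ℂ) (i : Fin n) (S : Finset (Fin n))
    (hi : i ∉ S) : hamM n m g {i} * hamM n m g S = hamM n m g (insert i S) := by
  ext u v
  rw [Matrix.mul_apply]
  have key : ∀ w, w ∉ Finset.univ.image (Function.update u i) →
      hamM n m g {i} u w * hamM n m g S w v = 0 := by
    intro w hw
    simp only [Finset.mem_image, Finset.mem_univ, true_and] at hw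
    have h1 : Function.update u i (w i) ≠ w := fun h => hw ⟨w i, h⟩
    have h2 : ∃ j, j ≠ i ∧ u j ≠ w j := by
      by_contra hcon
      push_neg at hcon
      exact h1 (funext fun j => by
        by_cases hj : j = i
        · subst hj; simp
        · rw [Function.update_of_ne hj]; exact (hcon j hj))
    obtain ⟨j, hji, hj⟩ := h2
    have : (∏ k ∈ ({i} : Finset (Fin n))ᶜ, (if u k = w k then (1:ℂ) else 0)) = 0 :=
      Finset.prod_eq_zero (by simpa using hji) (if_neg hj)
    simp [hamM, this]
  rw [← Finset.sum_subset (Finset.subset_univ _) (fun w _ hw => key w hw)]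
  rw [Finset.sum_image (fun x _ y _ h => Function.update_injective u i h)]
  have hterm : ∀ c : Fin m, hamM n m g {i} u (Function.update u i c) * hamM n m g S (Function.update u i c) v =
      (if c = v i then g i (u i) c * ((∏ k ∈ S, g k (u k) (v k)) *
        ∏ j ∈ Sᶜ.erase i, (if u j = v j then (1:ℂ) else 0)) else 0) := by
    intro c
    have hiSc : i ∈ Sᶜ := Finset.mem_compl.2 hi
    simp only [hamM, Matrix.of_apply, Finset.prod_singleton, Function.update_self]
    rw [← Finset.mul_prod_erase _ _ hiSc]
    have e1 : (∏ j ∈ ({i} : Finset (Fin n))ᶜ, (if u j = Function.update u i c j then (1:ℂ) else 0)) = 1 := by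
      apply Finset.prod_eq_one
      intro j hj
      rw [Function.update_of_ne (by simpa using hj)]
      simp
    have e2 : (∏ k ∈ S, g k (Function.update u i c k) (v k)) = ∏ k ∈ S, g k (u k) (v k) := by
      apply Finset.prod_congr rfl
      intro k hk
      rw [Function.update_of_ne (fun h => hi (by rwa [h] at hk))]
    have e3 : (∏ j ∈ Sᶜ.erase i, (if Function.update u i c j = v j then (1:ℂ) else 0)) =
        ∏ j ∈ Sᶜ.erase i, (if u j = v j then (1:ℂ) else 0) := by
      apply Finset.prod_congr rfl
      intro j hj
      rw [Function.update_of_ne (Finset.ne_of_mem_erase hj)]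
    rw [e1, e2, e3, Function.update_self]
    by_cases hc : c = v i <;> simp [hc]
  simp only [hterm]
  rw [Finset.sum_ite_eq' Finset.univ (v i)]
  simp only [Finset.mem_univ, if_true]
  simp only [hamM, Matrix.of_apply, Finset.prod_insert hi, Finset.compl_insert]
  ring

lemma hamM_comm (n m : ℕ) (g : Fin n → Fin m → Fin m → ℂ) (i j : Fin n) :
    Commute (hamM n m g {i}) (hamM n m g {j}) := by
  rcases eq_or_ne i j with rfl | hij
  · rfl
  · unfold Commute SemiconjBy
    rw [hamM_step n m g i {j} (by simpa using hij),
      hamM_step n m g j {i} (by simpa using hij.symm), Finset.pair_comm]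

lemma hamM_empty (n m : ℕ) (g : Fin n → Fin m → Fin m → ℂ) : hamM n m g ∅ = 1 := by
  ext u v
  simp only [hamM, Matrix.of_apply, Finset.prod_empty, one_mul, Finset.compl_empty,
    Finset.prod_boole, Matrix.one_apply]
  by_cases h : u = v
  · simp [h]
  · rw [if_neg h, if_neg (by simpa [funext_iff] using h)]

lemma hamM_noncommProd (n m : ℕ) (g : Fin n → Fin m → Fin m → ℂ) (S : Finset (Fin n)) :
    S.noncommProd (fun i => hamM n m g {i})
      (fun a _ b _ _ => hamM_comm n m g a b) = hamM n m g S := by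
  classical
  induction S using Finset.induction_on with
  | empty => erw [Finset.noncommProd_empty]; exact (hamM_empty n m g).symm
  | insert _ _ hi ih =>
    erw [Finset.noncommProd_insert_of_notMem _ _ _ _ hi, ih]; rw [hamM_step _ _ _ _ _ hi]

lemma exp_smul_of_mul_self {N : Type*} [Fintype N] [DecidableEq N]
    (P : Matrix N N ℂ) (μ : ℂ) (hμ : μ ≠ 0) (hP : P * P = μ • P) (y : ℂ) :
    exp (y • P) = 1 + ((Complex.exp (y * μ) - 1) / μ) • P := by
  letI : SeminormedRing (Matrix N N ℂ) := Matrix.linftyOpSemiNormedRing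
  letI : NormedRing (Matrix N N ℂ) := Matrix.linftyOpNormedRing
  letI : NormedAlgebra ℂ (Matrix N N ℂ) := Matrix.linftyOpNormedAlgebra
  have hpow : ∀ k : ℕ, P ^ (k + 1) = μ ^ k • P := by
    intro k
    induction k with
    | zero => simp
    | succ k ih =>
      rw [pow_succ, ih, smul_mul_assoc, hP, smul_smul, ← pow_succ]
  set c : ℕ → ℂ := fun k => if k = 0 then 0 else ((k.factorial : ℂ))⁻¹ * y ^ k * μ ^ (k - 1) with hc
  have hcs : c = fun k => μ⁻¹ * (((k.factorial : ℂ))⁻¹ * (y * μ) ^ k - if k = 0 then 1 else 0) := by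
    funext k
    cases k with
    | zero => simp [hc]
    | succ k =>
      have hf : (((k+1).factorial : ℂ)) ≠ 0 := Nat.cast_ne_zero.2 (Nat.factorial_ne_zero _)
      simp only [hc, Nat.succ_ne_zero, if_false, Nat.add_sub_cancel]
      field_simp
      ring
  have hsum_exp : Summable fun k : ℕ => (((k.factorial : ℂ))⁻¹ * (y * μ) ^ k) := by
    simpa [smul_eq_mul] using expSeries_summable' (𝕂 := ℂ) (y * μ)
  have hsum_ind : Summable fun k : ℕ => (if k = 0 then (1 : ℂ) else 0) :=
    summable_of_ne_finset_zero (s := {0}) (fun k hk => if_neg (by simpa using hk))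
  have hsumc : Summable c := by
    rw [hcs]
    exact ((hsum_exp.sub hsum_ind).mul_left μ⁻¹)
  have htsumc : ∑' k, c k = (Complex.exp (y * μ) - 1) / μ := by
    rw [hcs, tsum_mul_left, Summable.tsum_sub hsum_exp hsum_ind]
    have h1 : ∑' k : ℕ, (((k.factorial : ℂ))⁻¹ * (y * μ) ^ k) = Complex.exp (y * μ) := by
      rw [Complex.exp_eq_exp_ℂ, exp_eq_tsum (𝕂 := ℂ)]
      simp [smul_eq_mul]
    have h2 : ∑' k : ℕ, (if k = 0 then (1 : ℂ) else 0) = 1 := by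
      rw [tsum_eq_sum (s := {0}) (fun k hk => if_neg (by simpa using hk))]
      simp
    rw [h1, h2]
    field_simp
  have hterm : ∀ k : ℕ, (((k.factorial : ℂ))⁻¹) • (y • P) ^ k
      = (if k = 0 then (1 : Matrix N N ℂ) else 0) + c k • P := by
    intro k
    cases k with
    | zero => simp [hc]
    | succ k =>
      rw [smul_pow, hpow k]
      simp only [hc, Nat.succ_ne_zero, if_false, Nat.add_sub_cancel, zero_add, smul_smul]
      ring_nf
  simp only [exp_eq_tsum (𝕂 := ℂ)]
  rw [tsum_congr hterm,
    Summable.tsum_add (summable_of_ne_finset_zero (s := {0}) (fun k hk => by simp [if_neg (by simpa using hk)]))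
      (hsumc.smul_const P),
    tsum_eq_sum (s := {0}) (fun k hk => by simp [if_neg (by simpa using hk)]),
    Summable.tsum_smul_const hsumc, htsumc]
  simp

noncomputable def hamP (n m : ℕ) (i : Fin n) : Matrix (Fin n → Fin m) (Fin n → Fin m) ℂ :=
  Matrix.of fun u v => ∏ j ∈ ({i} : Finset (Fin n))ᶜ, (if u j = v j then (1:ℂ) else 0)

lemma sum_update (n m : ℕ) (u : Fin n → Fin m) (i : Fin n) (F : (Fin n → Fin m) → ℂ)
    (hF : ∀ w, (∃ j, j ≠ i ∧ u j ≠ w j) → F w = 0) :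
    ∑ w, F w = ∑ c, F (Function.update u i c) := by
  have key : ∀ w, w ∉ Finset.univ.image (Function.update u i) → F w = 0 := by
    intro w hw
    simp only [Finset.mem_image, Finset.mem_univ, true_and] at hw
    apply hF
    by_contra hcon
    push_neg at hcon
    exact hw ⟨w i, funext fun j => by
      by_cases hj : j = i
      · subst hj; simp
      · rw [Function.update_of_ne hj]; exact (hcon j hj)⟩
  rw [← Finset.sum_subset (Finset.subset_univ _) (fun w _ hw => key w hw),
    Finset.sum_image (fun x _ y _ h => Function.update_injective u i h)]

lemma hamP_sq (n m : ℕ) (i : Fin n) : hamP n m i * hamP n m i = (m : ℂ) • hamP n m i := by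
  ext u v
  rw [Matrix.mul_apply, sum_update n m u i _ (by
    rintro w ⟨j, hji, hj⟩
    have hz : (∏ k ∈ ({i} : Finset (Fin n))ᶜ, (if u k = w k then (1:ℂ) else 0)) = 0 :=
      Finset.prod_eq_zero (Finset.mem_compl.2 (by simpa using hji)) (if_neg hj)
    have : hamP n m i u w = 0 := by simpa [hamP] using hz
    simp [this])]
  have hterm : ∀ c : Fin m, hamP n m i u (Function.update u i c) *
      hamP n m i (Function.update u i c) v = hamP n m i u v := by
    intro c
    have e1 : hamP n m i u (Function.update u i c) = 1 := by
      simp only [hamP, Matrix.of_apply]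
      apply Finset.prod_eq_one
      intro j hj
      rw [Function.update_of_ne (by simpa using hj)]
      simp
    have e2 : hamP n m i (Function.update u i c) v = hamP n m i u v := by
      simp only [hamP, Matrix.of_apply]
      apply Finset.prod_congr rfl
      intro j hj
      rw [Function.update_of_ne (by simpa using hj)]
    rw [e1, e2, one_mul]
  simp [hterm, Matrix.smul_apply, smul_eq_mul]

lemma adj_decomp (n m : ℕ) :
    (hammingGraph n m).adjMatrix ℂ = ∑ i, (hamP n m i - 1) := by
  ext u v
  rw [SimpleGraph.adjMatrix_apply]
  simp only [SimpleGraph.adjMatrix_apply, hammingGraph, Matrix.sum_apply, Matrix.sub_apply]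
  by_cases huv : u = v
  · subst huv
    have : ∀ i, hamP n m i u u = 1 := by
      intro i; simp [hamP]
    simp [this, Matrix.one_apply, hammingDist_self]
  · have h1 : (1 : Matrix (Fin n → Fin m) (Fin n → Fin m) ℂ) u v = 0 := by
      simp [Matrix.one_apply, huv]
    have hPx : ∀ i, hamP n m i u v =
        if (Finset.univ.filter fun j => u j ≠ v j) = {i} then 1 else 0 := by
      intro i
      simp only [hamP, Matrix.of_apply, Finset.prod_boole]
      congr 1
      simp only [eq_iff_iff]
      constructor
      · intro h
        apply Finset.Subset.antisymm
        · intro j hj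
          simp only [Finset.mem_filter, Finset.mem_univ, true_and] at hj
          simp only [Finset.mem_singleton]
          by_contra hji
          exact hj (h j (by simpa using hji))
        · intro j hj
          simp only [Finset.mem_singleton] at hj
          subst hj
          simp only [Finset.mem_filter, Finset.mem_univ, true_and]
          intro hc
          exact huv (funext fun k => by
            by_cases hk : k = j
            · subst hk; exact hc
            · exact h k (by simpa using hk))
      · intro h j hj
        by_contra hc
        have : j ∈ (Finset.univ.filter fun k => u k ≠ v k) := by simpa using hc
        rw [h] at this
        simp only [Finset.mem_singleton] at this
        exact (by simpa using hj : j ≠ i) this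
    simp only [h1, sub_zero, hPx]
    by_cases hd : hammingDist u v = 1
    · obtain ⟨i₀, hi₀⟩ := Finset.card_eq_one.1 hd
      erw [if_pos hd]
      rw [Finset.sum_congr rfl (fun i _ => by rw [hi₀])]
      have : ∀ i : Fin n, (({i₀} : Finset (Fin n)) = {i}) ↔ i = i₀ :=
        fun i => ⟨fun h => (Finset.singleton_injective h).symm, fun h => by rw [h]⟩
      simp only [this]
      simp
    · erw [if_neg hd]
      symm
      apply Finset.sum_eq_zero
      intro i _
      rw [if_neg]
      intro hc
      exact hd (by rw [hammingDist, hc]; simp)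

lemma scalar_id (m n d : ℕ) (hm : 1 ≤ m) (hd : d ≤ n) (t : ℝ) :
    (Complex.exp (-(-(Complex.I * (t:ℂ)))) *
        ((Complex.exp ((-(Complex.I * (t:ℂ))) * m) - 1) / m)) ^ d *
      (Complex.exp (-(-(Complex.I * (t:ℂ)))) *
        (1 + (Complex.exp ((-(Complex.I * (t:ℂ))) * m) - 1) / m)) ^ (n - d) =
    ((-1 : ℂ) ^ d / (m : ℂ) ^ n) *
      Complex.exp (-(Complex.I * (t:ℂ) * (n:ℂ) * ((m:ℂ) - 1))) *
      (Complex.exp (Complex.I * (t:ℂ) * (m:ℂ)) - 1) ^ d *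
      (1 + ((m : ℂ) - 1) * Complex.exp (Complex.I * (t:ℂ) * (m:ℂ))) ^ (n - d) := by
  have hmC : (m : ℂ) ≠ 0 := Nat.cast_ne_zero.2 (by omega)
  have B1 : Complex.exp (-(-(Complex.I * (t:ℂ)))) *
      ((Complex.exp ((-(Complex.I * (t:ℂ))) * m) - 1) / m) =
      (-1) * (Complex.exp (-(Complex.I * (t:ℂ) * ((m:ℂ) - 1))) *
        (Complex.exp (Complex.I * (t:ℂ) * (m:ℂ)) - 1) / m) := by
    field_simp
    ring_nf
    simp only [← Complex.exp_add]
    ring_nf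
  have B2 : Complex.exp (-(-(Complex.I * (t:ℂ)))) *
      (1 + (Complex.exp ((-(Complex.I * (t:ℂ))) * m) - 1) / m) =
      Complex.exp (-(Complex.I * (t:ℂ) * ((m:ℂ) - 1))) *
        (1 + ((m:ℂ) - 1) * Complex.exp (Complex.I * (t:ℂ) * (m:ℂ))) / m := by
    field_simp
    ring_nf
    simp only [mul_assoc, ← Complex.exp_add]
    ring_nf
  rw [B1, B2]
  have hmpow : (m : ℂ) ^ d * (m : ℂ) ^ (n - d) = (m : ℂ) ^ n := by
    rw [← pow_add, Nat.add_sub_cancel' hd]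
  have hEpow : Complex.exp (-(Complex.I * (t:ℂ) * ((m:ℂ) - 1))) ^ d *
      Complex.exp (-(Complex.I * (t:ℂ) * ((m:ℂ) - 1))) ^ (n - d) =
      Complex.exp (-(Complex.I * (t:ℂ) * (n:ℂ) * ((m:ℂ) - 1))) := by
    rw [← pow_add, Nat.add_sub_cancel' hd, ← Complex.exp_nat_mul]
    congr 1
    ring
  simp only [mul_pow, div_pow]
  field_simp
  rw [← hmpow, show Complex.exp (-(Complex.I * (t:ℂ) * ((m:ℂ) - 1) * (n:ℂ))) =
      Complex.exp (-(Complex.I * (t:ℂ) * (n:ℂ) * ((m:ℂ) - 1))) from (by congr 1; ring), ← hEpow]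
  ring


lemma hamM_one_eq_hamP (n m : ℕ) (i : Fin n) :
    hamM n m (fun _ _ _ => (1:ℂ)) {i} = hamP n m i := by
  ext u v
  simp [hamM, hamP]

lemma hamP_comm (n m : ℕ) (i j : Fin n) : Commute (hamP n m i) (hamP n m j) := by
  rw [← hamM_one_eq_hamP n m i, ← hamM_one_eq_hamP n m j]
  exact hamM_comm n m _ i j

open NormedSpace in
/-- Closed form for the entries of the continuous-time quantum walk operator on the
`(n, m)` Hamming graph: for vertices `u v` at Hamming distance `d`,
`(exp (-i t A)) u v
  = ((-1)^d / m^n) * e^{-i t n (m-1)} * (e^{i t m} - 1)^d * (1 + (m-1) e^{i t m})^{n-d}`. -/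
theorem ctqw_hammingGraph_entry
    (n m : ℕ) (hm : 1 ≤ m) (t : ℝ) (u v : Fin n → Fin m) :
    exp ((-(Complex.I * (t : ℂ))) • (hammingGraph n m).adjMatrix ℂ) u v =
      ((-1 : ℂ) ^ hammingDist u v / (m : ℂ) ^ n) *
        Complex.exp (-(Complex.I * (t : ℂ) * (n : ℂ) * ((m : ℂ) - 1))) *
        (Complex.exp (Complex.I * (t : ℂ) * (m : ℂ)) - 1) ^ hammingDist u v *
        (1 + ((m : ℂ) - 1) * Complex.exp (Complex.I * (t : ℂ) * (m : ℂ)))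
          ^ (n - hammingDist u v) := by
  classical
  have hmC : (m : ℂ) ≠ 0 := Nat.cast_ne_zero.2 (by omega)
  set x : ℂ := -(Complex.I * (t : ℂ)) with hx
  set c : ℂ := (Complex.exp (x * m) - 1) / m with hcdef
  set G : Fin n → Fin m → Fin m → ℂ :=
    fun _ a b => Complex.exp (-x) * ((if a = b then (1:ℂ) else 0) + c) with hG
  have hdec : x • (hammingGraph n m).adjMatrix ℂ = ∑ i, x • (hamP n m i - 1) := by
    rw [adj_decomp, Finset.smul_sum]
  have hfac : ∀ i : Fin n, exp (x • (hamP n m i - 1)) = hamM n m G {i} := by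
    intro i
    have hsplit : x • (hamP n m i - 1) =
        x • hamP n m i + (-x) • (1 : Matrix (Fin n → Fin m) (Fin n → Fin m) ℂ) := by
      module
    rw [hsplit, Matrix.exp_add_of_commute _ _
        (((Commute.one_right (hamP n m i)).smul_left x).smul_right (-x)),
      exp_smul_of_mul_self _ _ hmC (hamP_sq n m i) x,
      exp_smul_of_mul_self 1 1 one_ne_zero (by simp) (-x)]
    have h2 : (1 : Matrix (Fin n → Fin m) (Fin n → Fin m) ℂ) +
        ((Complex.exp (-x * 1) - 1) / 1) • (1 : Matrix (Fin n → Fin m) (Fin n → Fin m) ℂ) =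
        Complex.exp (-x) • 1 := by
      rw [div_one, mul_one, sub_smul, one_smul]
      abel
    rw [h2, mul_smul_comm, mul_one]
    ext u' v'
    simp only [hamM, Matrix.smul_apply, Matrix.add_apply, Matrix.one_apply, hamP,
      Matrix.of_apply, Finset.prod_singleton, smul_eq_mul, hG]
    by_cases h : ∀ j ∈ ({i} : Finset (Fin n))ᶜ, u' j = v' j
    · have hp : (∏ j ∈ ({i} : Finset (Fin n))ᶜ, (if u' j = v' j then (1:ℂ) else 0)) = 1 :=
        Finset.prod_eq_one (fun j hj => if_pos (h j hj))
      have hiff : (u' = v') ↔ (u' i = v' i) :=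
        ⟨fun h' => by rw [h'], fun h2' => funext fun j => by
          by_cases hj : j = i
          · subst hj; exact h2'
          · exact h j (Finset.mem_compl.2 (by simpa using hj))⟩
      rw [hp]
      by_cases h2' : u' i = v' i
      · rw [if_pos (hiff.2 h2'), if_pos h2']; ring
      · rw [if_neg (fun hh => h2' (hiff.1 hh)), if_neg h2']; ring
    · push_neg at h
      obtain ⟨j, hjmem, hj⟩ := h
      have hp : (∏ j ∈ ({i} : Finset (Fin n))ᶜ, (if u' j = v' j then (1:ℂ) else 0)) = 0 :=
        Finset.prod_eq_zero hjmem (if_neg hj)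
      have huv : u' ≠ v' := fun hh => hj (by rw [hh])
      rw [hp, if_neg huv]
      ring
  have hexp : exp (x • (hammingGraph n m).adjMatrix ℂ) = hamM n m G Finset.univ := by
    rw [hdec, Matrix.exp_sum_of_commute _ _
      (fun i _ j _ _ => ((((hamP_comm n m i j).sub_right (Commute.one_right _)).sub_left
        (Commute.one_left _)).smul_left x).smul_right x)]
    erw [Finset.noncommProd_congr rfl (fun i _ => hfac i) _]
    exact hamM_noncommProd n m G Finset.univ
  have hentry : exp (x • (hammingGraph n m).adjMatrix ℂ) u v = ∏ i, G i (u i) (v i) := by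
    rw [hexp]
    simp [hamM]
  rw [hentry]
  have hdn : hammingDist u v ≤ n := by
    simpa using (hammingDist_le_card_fintype (x := u) (y := v))
  have hsplit2 : (∏ i, G i (u i) (v i)) =
      (Complex.exp (-x) * c) ^ hammingDist u v *
        (Complex.exp (-x) * (1 + c)) ^ (n - hammingDist u v) := by
    rw [← Finset.prod_filter_mul_prod_filter_not Finset.univ (fun i => u i ≠ v i)]
    have e1 : ∀ i ∈ Finset.univ.filter (fun i => u i ≠ v i),
        G i (u i) (v i) = Complex.exp (-x) * c := by
      intro i hi
      simp only [Finset.mem_filter] at hi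
      simp [hG, if_neg hi.2]
    have e2 : ∀ i ∈ Finset.univ.filter (fun i => ¬ u i ≠ v i),
        G i (u i) (v i) = Complex.exp (-x) * (1 + c) := by
      intro i hi
      simp only [Finset.mem_filter, not_not] at hi
      simp [hG, if_pos hi.2]
    have hc1 : (Finset.univ.filter (fun i => u i ≠ v i)).card = hammingDist u v := rfl
    have hc2 : (Finset.univ.filter (fun i => ¬ u i ≠ v i)).card = n - hammingDist u v := by
      have := Finset.card_filter_add_card_filter_not
        (s := (Finset.univ : Finset (Fin n))) (p := fun i => u i ≠ v i)
      simp only [Finset.card_univ, Fintype.card_fin] at this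
      omega
    rw [Finset.prod_congr rfl e1, Finset.prod_congr rfl e2, Finset.prod_const,
      Finset.prod_const, hc1, hc2]
  rw [hsplit2, hx, hcdef]
  exact scalar_id m n (hammingDist u v) hm hdn t
end

section
/- Let m ≥ 2 and let A be the adjacency matrix over ℂ of the complete graph on m vertices (A = J − I with J the all-ones m×m matrix). Fix a target vertex s and form the phase-encoded uniform state ψ with coordinates ψ_s = 1/√m and ψ_v = e^{−iπ}/√m = −1/√m for v ≠ s. Then the amplitude at s after a continuous-time quantum walk for time t = π/m satisfies |⟨δ_s, exp(−i (π/m) A) ψ⟩|² = (3m − 4)² / m³. In particular, for m = 4 this probability equals 1. -/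
open NormedSpace Matrix

lemma exp_mulVec_eigen {n : ℕ} (M : Matrix (Fin n) (Fin n) ℂ) (v : Fin n → ℂ) (μ : ℂ)
    (h : M.mulVec v = μ • v) :
    (exp M).mulVec v = Complex.exp μ • v := by
  letI : SeminormedRing (Matrix (Fin n) (Fin n) ℂ) := Matrix.linftyOpSemiNormedRing
  letI : NormedRing (Matrix (Fin n) (Fin n) ℂ) := Matrix.linftyOpNormedRing
  letI : NormedAlgebra ℂ (Matrix (Fin n) (Fin n) ℂ) := Matrix.linftyOpNormedAlgebra
  have hpow : ∀ k : ℕ, (M ^ k).mulVec v = μ ^ k • v := by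
    intro k
    induction k with
    | zero => simp [Matrix.one_mulVec]
    | succ k ih =>
      rw [pow_succ, ← Matrix.mulVec_mulVec, h, Matrix.mulVec_smul, ih, smul_smul, pow_succ,
        mul_comm]
  let L : Matrix (Fin n) (Fin n) ℂ →ₗ[ℂ] (Fin n → ℂ) :=
    { toFun := fun N => N.mulVec v
      map_add' := fun N₁ N₂ => Matrix.add_mulVec N₁ N₂ v
      map_smul' := fun c N => Matrix.smul_mulVec c N v }
  have hLc : Continuous L := L.continuous_of_finiteDimensional
  have hsum : Summable (fun k : ℕ => ((k.factorial : ℂ))⁻¹  • M ^ k) := expSeries_summable' M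
  have key : (exp M).mulVec v = ∑' k : ℕ, L (((k.factorial : ℂ))⁻¹  • M ^ k) := by
    rw [exp_eq_tsum ℂ]
    exact ((hsum.hasSum.map L hLc).tsum_eq).symm
  rw [key]
  have : ∀ k : ℕ, L (((k.factorial : ℂ))⁻¹  • M ^ k) = (((k.factorial : ℂ))⁻¹  * μ ^ k) • v := by
    intro k
    simp only [L, LinearMap.coe_mk, AddHom.coe_mk, Matrix.smul_mulVec, hpow, smul_smul]
  simp_rw [this]
  rw [Summable.tsum_smul_const, Complex.exp_eq_exp_ℂ, exp_eq_tsum ℂ]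
  · simpa using expSeries_summable' (𝕂 := ℂ) μ
  · simpa using expSeries_summable' (𝕂 := ℂ) μ

lemma top_adj_mulVec {n : ℕ} (f : Fin n → ℂ) (x : Fin n) :
    ((⊤ : SimpleGraph (Fin n)).adjMatrix ℂ).mulVec f x = (∑ y, f y) - f x := by
  classical
  simp only [Matrix.mulVec, dotProduct, SimpleGraph.adjMatrix_apply, SimpleGraph.top_adj,
    ite_mul, one_mul, zero_mul]
  have h : ∀ y : Fin n, (if x ≠ y then f y else 0) = f y - (if y = x then f y else 0) := by
    intro y
    by_cases h : y = x <;> simp [h, Ne, eq_comm, if_neg]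
    exact fun hx => absurd hx.symm h
  rw [Finset.sum_congr rfl fun y _ => h y, Finset.sum_sub_distrib]
  simp

open NormedSpace in
/-- For the complete graph on `m ≥ 2` vertices with adjacency matrix `A`, a target
vertex `s`, and the phase-encoded uniform state `ψ` with `ψ s = 1/√m` and
`ψ v = -1/√m` for `v ≠ s`, the amplitude at `s` after a continuous-time quantum walk
for time `t = π/m` satisfies
`|⟨δ_s, exp (-i (π/m) A) ψ⟩|² = (3m - 4)² / m³`.  In particular this probability
equals `1` when `m = 4`. -/
theorem ctqw_completeGraph_grover_amplitude
    (m : ℕ) (hm : 2 ≤ m) (s : Fin m)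
    (ψ : Fin m → ℂ)
    (hψ : ∀ v : Fin m, ψ v =
      if v = s then (1 / Real.sqrt m : ℝ) else (-(1 / Real.sqrt m) : ℝ)) :
    ‖(exp ((-(Complex.I * ((Real.pi / m : ℝ) : ℂ))) •
            (⊤ : SimpleGraph (Fin m)).adjMatrix ℂ)).mulVec ψ s‖ ^ 2 =
      (3 * (m : ℝ) - 4) ^ 2 / (m : ℝ) ^ 3 ∧
    (m = 4 →
      ‖(exp ((-(Complex.I * ((Real.pi / m : ℝ) : ℂ))) •
              (⊤ : SimpleGraph (Fin m)).adjMatrix ℂ)).mulVec ψ s‖ ^ 2 = 1) := by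
  have hmR : (2:ℝ) ≤ (m:ℝ) := by exact_mod_cast hm
  have hm0 : (0:ℝ) < m := by linarith
  have hmC : (m:ℂ) ≠ 0 := by exact_mod_cast hm0.ne'
  set c : ℂ := -(Complex.I * ((Real.pi / m : ℝ) : ℂ)) with hc
  set A := (⊤ : SimpleGraph (Fin m)).adjMatrix ℂ with hA
  set r : ℂ := ((1 / Real.sqrt m : ℝ) : ℂ) with hr
  set u : Fin m → ℂ := fun _ => 1 with hu_def
  set w : Fin m → ℂ := fun v => if v = s then ((m:ℂ) - 1) else -1 with hw_def
  have hu : (c • A).mulVec u = (c * ((m:ℂ) - 1)) • u := by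
    funext x
    rw [Matrix.smul_mulVec]
    simp only [Pi.smul_apply, hA, top_adj_mulVec, hu_def, smul_eq_mul]
    simp [mul_comm]
  have hsumw : ∑ y, w y = 0 := by
    have hterm : ∀ y, w y = -1 + (if y = s then (m:ℂ) else 0) := by
      intro y; simp only [hw_def]; by_cases h : y = s <;> simp [h] <;> ring
    rw [Finset.sum_congr rfl fun y _ => hterm y, Finset.sum_add_distrib]
    simp
  have hw : (c • A).mulVec w = (-c) • w := by
    funext x
    rw [Matrix.smul_mulVec]
    simp only [Pi.smul_apply, hA, top_adj_mulVec, hsumw, smul_eq_mul]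
    ring
  have hψ' : ψ = ((((2:ℂ) - m)/m) * r) • u + (((2:ℂ)/m) * r) • w := by
    funext v
    by_cases hv : v = s
    · rw [hψ v, if_pos hv, ← hr]
      simp only [Pi.add_apply, Pi.smul_apply, hu_def, hw_def, if_pos hv, smul_eq_mul]
      field_simp
      ring
    · rw [hψ v, if_neg hv, Complex.ofReal_neg, ← hr]
      simp only [Pi.add_apply, Pi.smul_apply, hu_def, hw_def, if_neg hv, smul_eq_mul]
      field_simp
      ring
  have hexp1 : Complex.exp (c * ((m:ℂ) - 1)) = -Complex.exp (-c) := by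
    have h1 : c * ((m:ℂ) - 1) = c * m + (-c) := by ring
    have h2 : c * (m:ℂ) = -(Real.pi) * Complex.I := by
      rw [hc]
      push_cast
      field_simp
    rw [h1, Complex.exp_add, h2]
    rw [neg_mul, Complex.exp_neg, Complex.exp_pi_mul_I]
    ring
  have hamp : (NormedSpace.exp (c • A)).mulVec ψ s
      = Complex.exp (-c) * (r * ((3 * (m:ℂ) - 4)/m)) := by
    rw [hψ', Matrix.mulVec_add, Matrix.mulVec_smul, Matrix.mulVec_smul,
      exp_mulVec_eigen _ u _ hu, exp_mulVec_eigen _ w _ hw]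
    simp only [Pi.add_apply, Pi.smul_apply, hu_def, hw_def, if_pos rfl, smul_eq_mul, hexp1]
    simp only [if_true]
    field_simp
    try ring
    try exact Or.inl trivial
  have habs : ‖(NormedSpace.exp (c • A)).mulVec ψ s‖ ^ 2
      = (3 * (m:ℝ) - 4) ^ 2 / (m:ℝ) ^ 3 := by
    rw [hamp]
    have h34 : (0:ℝ) ≤ 3 * (m:ℝ) - 4 := by linarith
    have hsq : Real.sqrt m ^ 2 = (m:ℝ) := Real.sq_sqrt hm0.le
    have hsqpos : (0:ℝ) < Real.sqrt m := Real.sqrt_pos.mpr hm0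
    have hE : ‖Complex.exp (-c)‖ = 1 := by
      rw [Complex.norm_exp, hc]
      norm_num [Complex.exp_zero]
    have hcast : r * ((3 * (m:ℂ) - 4)/m) = (((1 / Real.sqrt m) * ((3 * (m:ℝ) - 4)/m) : ℝ) : ℂ) := by
      rw [hr]; push_cast; ring
    rw [norm_mul, hE, one_mul, hcast, Complex.norm_real, Real.norm_eq_abs, abs_of_nonneg (by positivity), mul_pow,
      div_pow, div_pow, one_pow, hsq]
    field_simp
    try ring
    try exact Or.inl trivial
  refine ⟨habs, fun hm4 => ?_⟩
  rw [habs, hm4]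
  norm_num
end

section
/- Fix a finite alphabet X and a tuple s₀ : Fin n → X with n ≥ 1, and for x ∈ X let c_x be the number of coordinates i with s₀ i = x. Then the diameter of the constrained permutation graph on s₀ equals n − max_{x ∈ X} c_x; that is, any rearrangement of s₀ can be reached from any other by at most n − max_x c_x swaps of unequal entries, and this bound is attained by some pair of rearrangements. -/
/-- Vertices of the constrained permutation graph on `s₀`: the rearrangements of the
tuple `s₀`. -/
abbrev CPVertex {n : ℕ} {X : Type*} (s₀ : Fin n → X) : Type _ :=
  {s : Fin n → X // ∃ σ : Equiv.Perm (Fin n), s = s₀ ∘ σ}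

/-- The constrained permutation graph on `s₀`: vertices are the rearrangements of
`s₀`, and two rearrangements are adjacent iff they differ in exactly two
coordinates (equivalently, one is obtained from the other by swapping the values at
two coordinates holding distinct values). -/
def cpGraph {n : ℕ} {X : Type*} [DecidableEq X] (s₀ : Fin n → X) :
    SimpleGraph (CPVertex s₀) where
  Adj s t := (Finset.univ.filter fun i => s.1 i ≠ t.1 i).card = 2
  symm := by
    constructor
    intro s t h
    have he : (Finset.univ.filter fun i => t.1 i ≠ s.1 i) =
        (Finset.univ.filter fun i => s.1 i ≠ t.1 i) :=
      Finset.filter_congr (fun i _ => by rw [ne_comm])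
    rw [he]
    exact h
  loopless := by
    constructor
    intro s h
    simp at h

section Aux

open Finset

variable {n : ℕ} {X : Type*}

section Counting
variable [DecidableEq X]

lemma count_comp_perm (v : Fin n → X) (σ : Equiv.Perm (Fin n)) (y : X) :
    (Finset.univ.filter fun i => v (σ i) = y).card
      = (Finset.univ.filter fun i => v i = y).card := by
  apply Finset.card_bij (fun i _ => σ i)
  · intro a ha
    simp only [Finset.mem_filter, Finset.mem_univ, true_and] at ha ⊢
    exact ha
  · intro a _ b _ h
    exact σ.injective h
  · intro b hb
    simp only [Finset.mem_filter, Finset.mem_univ, true_and] at hb ⊢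
    exact ⟨σ.symm b, by simp [hb], by simp⟩

lemma exists_perm_of_count_eq {u v : Fin n → X}
    (h : ∀ y, (Finset.univ.filter fun i => u i = y).card
      = (Finset.univ.filter fun i => v i = y).card) :
    ∃ σ : Equiv.Perm (Fin n), u = v ∘ σ := by
  have e : ∀ y : X, {i // u i = y} ≃ {i // v i = y} := fun y =>
    Fintype.equivOfCardEq (by
      rw [Fintype.card_subtype, Fintype.card_subtype]
      exact h y)
  refine ⟨(Equiv.sigmaFiberEquiv u).symm.trans
    ((Equiv.sigmaCongrRight e).trans (Equiv.sigmaFiberEquiv v)), funext fun i => ?_⟩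
  simp only [Function.comp_apply, Equiv.trans_apply, Equiv.sigmaFiberEquiv,
    Equiv.coe_fn_symm_mk, Equiv.sigmaCongrRight_apply, Equiv.coe_fn_mk, Sigma.map]
  exact ((e (u i)) ⟨i, rfl⟩).2.symm

variable {s₀ : Fin n → X}

lemma count_vertex (u : CPVertex s₀) (y : X) :
    (Finset.univ.filter fun i => u.1 i = y).card
      = (Finset.univ.filter fun i => s₀ i = y).card := by
  obtain ⟨σ, hσ⟩ := u.2
  have : (Finset.univ.filter fun i => u.1 i = y)
      = (Finset.univ.filter fun i => s₀ (σ i) = y) := by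
    apply Finset.filter_congr
    intro i _
    rw [hσ]
    rfl
  rw [this, count_comp_perm]

lemma count_vertex_eq (u v : CPVertex s₀) (y : X) :
    (Finset.univ.filter fun i => u.1 i = y).card
      = (Finset.univ.filter fun i => v.1 i = y).card := by
  rw [count_vertex, count_vertex]

lemma adj_swap {u v : CPVertex s₀} (h : (cpGraph s₀).Adj u v) :
    ∃ i j : Fin n, i ≠ j ∧ u.1 i ≠ u.1 j ∧ u.1 = v.1 ∘ ⇑(Equiv.swap i j) := by
  have h2 : (Finset.univ.filter fun i => u.1 i ≠ v.1 i).card = 2 := h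
  obtain ⟨i, j, hij, hset⟩ := Finset.card_eq_two.mp h2
  have himem : i ∈ Finset.univ.filter fun r => u.1 r ≠ v.1 r := by rw [hset]; simp
  have hjmem : j ∈ Finset.univ.filter fun r => u.1 r ≠ v.1 r := by rw [hset]; simp
  have hi : u.1 i ≠ v.1 i := (Finset.mem_filter.mp himem).2
  have hj : u.1 j ≠ v.1 j := (Finset.mem_filter.mp hjmem).2
  have hoff : ∀ r : Fin n, r ≠ i → r ≠ j → u.1 r = v.1 r := by
    intro r hri hrj
    by_contra hne
    have : r ∈ Finset.univ.filter fun r => u.1 r ≠ v.1 r := by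
      simp [hne]
    rw [hset] at this
    simp only [Finset.mem_insert, Finset.mem_singleton] at this
    tauto
  have main : ∀ (w z : CPVertex s₀), (∀ r : Fin n, r ≠ i → r ≠ j → w.1 r = z.1 r) →
      w.1 i ≠ z.1 i → w.1 j ≠ z.1 j → z.1 j = w.1 i := by
    intro w z hwz hwi hwj
    by_contra hne
    set a := w.1 i with ha
    have hsub : (Finset.univ.filter fun r => z.1 r = a)
        ⊆ (Finset.univ.filter fun r => w.1 r = a).erase i := by
      intro r hr
      simp only [Finset.mem_filter, Finset.mem_univ, true_and] at hr
      have hri : r ≠ i := by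
        rintro rfl
        exact hwi hr.symm
      have hrj : r ≠ j := by
        rintro rfl
        exact hne hr
      refine Finset.mem_erase.mpr ⟨hri, ?_⟩
      simp only [Finset.mem_filter, Finset.mem_univ, true_and]
      rw [hwz r hri hrj]; exact hr
    have hcard := Finset.card_le_card hsub
    have hicount : i ∈ Finset.univ.filter fun r => w.1 r = a := by simp [ha]
    have := Finset.card_erase_of_mem hicount
    rw [this] at hcard
    have hpos : 0 < (Finset.univ.filter fun r => w.1 r = a).card :=
      Finset.card_pos.mpr ⟨i, hicount⟩
    have hceq := count_vertex_eq w z a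
    omega
  have h1 : v.1 j = u.1 i := main u v hoff hi hj
  have h2' : u.1 j = v.1 i := by
    have := main v u (fun r hri hrj => (hoff r hri hrj).symm) (Ne.symm hi) (Ne.symm hj)
    exact this
  refine ⟨i, j, hij, ?_, funext fun r => ?_⟩
  · rw [h2']
    exact fun hh => hi hh
  · rcases eq_or_ne r i with rfl | hri
    · simp [Equiv.swap_apply_left, h1]
    rcases eq_or_ne r j with rfl | hrj
    · simp [Equiv.swap_apply_right, h2']
    · simp [Equiv.swap_apply_of_ne_of_ne hri hrj, hoff r hri hrj]

lemma walk_to_swaps {u v : CPVertex s₀} (p : (cpGraph s₀).Walk u v) :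
    ∃ l : List (Equiv.Perm (Fin n)), (∀ τ ∈ l, ∃ a b : Fin n, τ = Equiv.swap a b) ∧
      l.length = p.length ∧ u.1 = v.1 ∘ ⇑(l.prod) := by
  induction p with
  | nil => exact ⟨[], by simp, by simp, by simp⟩
  | @cons u w v h q ih =>
    obtain ⟨l, hl, hlen, hcomp⟩ := ih
    obtain ⟨i, j, hij, -, huv⟩ := adj_swap h
    refine ⟨l ++ [Equiv.swap i j], ?_, ?_, ?_⟩
    · intro τ hτ
      rcases List.mem_append.mp hτ with hτ | hτ
      · exact hl τ hτ
      · rcases List.mem_singleton.mp hτ with rfl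
        exact ⟨i, j, rfl⟩
    · simp [hlen]
    · rw [List.prod_append, List.prod_singleton]
      funext r
      have : u.1 r = w.1 (Equiv.swap i j r) := congrFun huv r
      rw [this, congrFun hcomp (Equiv.swap i j r)]
      simp [Equiv.Perm.mul_apply]

lemma phi_zero_eq (x : X) (s s' : CPVertex s₀)
    (hphi : (Finset.univ.filter fun i => s.1 i ≠ s'.1 i ∧ s'.1 i ≠ x).card = 0) :
    s = s' := by
  classical
  set D := Finset.univ.filter fun i => s.1 i ≠ s'.1 i with hD
  have hDx : ∀ i ∈ D, s'.1 i = x := by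
    intro i hi
    simp only [hD, Finset.mem_filter, Finset.mem_univ, true_and] at hi
    by_contra hne
    have : i ∈ Finset.univ.filter fun i => s.1 i ≠ s'.1 i ∧ s'.1 i ≠ x := by
      simp [hi, hne]
    rw [Finset.card_eq_zero] at hphi
    simp [hphi] at this
  set A := Finset.univ.filter fun i => s.1 i = x with hA
  set B := Finset.univ.filter fun i => s'.1 i = x with hB
  have hDB : D ⊆ B := by
    intro i hi
    simp only [hB, Finset.mem_filter, Finset.mem_univ, true_and]
    exact hDx i hi
  have hAD : A \ D = B \ D := by
    ext i
    simp only [hA, hB, hD, Finset.mem_sdiff, Finset.mem_filter, Finset.mem_univ, true_and,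
      not_not]
    constructor
    · rintro ⟨h1, h2⟩
      exact ⟨h2 ▸ h1, h2⟩
    · rintro ⟨h1, h2⟩
      exact ⟨h2 ▸ h1, h2⟩
  have hADA : A \ D = A := by
    rw [Finset.sdiff_eq_self_iff_disjoint]
    rw [Finset.disjoint_left]
    intro i hiA hiD
    have := hDx i hiD
    simp only [hA, Finset.mem_filter, Finset.mem_univ, true_and] at hiA
    simp only [hD, Finset.mem_filter, Finset.mem_univ, true_and] at hiD
    exact hiD (hiA.trans this.symm)
  have hcards : (B \ D).card + D.card = B.card := Finset.card_sdiff_add_card_eq_card hDB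
  have hAB : A.card = B.card := count_vertex_eq s s' x
  have : D.card = 0 := by
    rw [← hAD, hADA] at hcards
    omega
  rw [Finset.card_eq_zero] at this
  apply Subtype.ext
  funext i
  by_contra hne
  have hiD : i ∈ D := by simp [hD, hne]
  rw [this] at hiD
  exact absurd hiD (Finset.notMem_empty i)

lemma phi_step (x : X) (s s' : CPVertex s₀)
    (hphi : (Finset.univ.filter fun i => s.1 i ≠ s'.1 i ∧ s'.1 i ≠ x).card ≠ 0) :
    ∃ t : CPVertex s₀, (cpGraph s₀).Adj s t ∧
      (Finset.univ.filter fun i => t.1 i ≠ s'.1 i ∧ s'.1 i ≠ x).card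
        < (Finset.univ.filter fun i => s.1 i ≠ s'.1 i ∧ s'.1 i ≠ x).card := by
  classical
  obtain ⟨i, hi⟩ := Finset.card_ne_zero.mp hphi
  simp only [Finset.mem_filter, Finset.mem_univ, true_and] at hi
  obtain ⟨hine, hix⟩ := hi
  set a := s'.1 i with ha
  set D := Finset.univ.filter fun r => s.1 r ≠ s'.1 r with hD
  have hcount : ((Finset.univ.filter fun r => s.1 r = a) ∩ D).card
      = ((Finset.univ.filter fun r => s'.1 r = a) ∩ D).card := by
    have e1 := Finset.card_inter_add_card_sdiff (Finset.univ.filter fun r => s.1 r = a) D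
    have e2 := Finset.card_inter_add_card_sdiff (Finset.univ.filter fun r => s'.1 r = a) D
    have e3 : (Finset.univ.filter fun r => s.1 r = a) \ D
        = (Finset.univ.filter fun r => s'.1 r = a) \ D := by
      ext r
      simp only [hD, Finset.mem_sdiff, Finset.mem_filter, Finset.mem_univ, true_and, not_not]
      constructor
      · rintro ⟨h1, h2⟩; exact ⟨h2 ▸ h1, h2⟩
      · rintro ⟨h1, h2⟩; exact ⟨h2 ▸ h1, h2⟩
    have e4 := count_vertex_eq s s' a
    rw [e3] at e1
    omega
  have hiD : i ∈ (Finset.univ.filter fun r => s'.1 r = a) ∩ D := by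
    simp [hD, ha, hine]
    exact hine
  have hpos : 0 < ((Finset.univ.filter fun r => s.1 r = a) ∩ D).card := by
    rw [hcount]
    exact Finset.card_pos.mpr ⟨i, hiD⟩
  obtain ⟨j, hj⟩ := Finset.card_pos.mp hpos
  simp only [hD, Finset.mem_inter, Finset.mem_filter, Finset.mem_univ, true_and] at hj
  obtain ⟨hja, hjne⟩ := hj
  have hji : j ≠ i := by
    rintro rfl
    exact hjne (hja.trans ha)
  have hsij : s.1 i ≠ s.1 j := by
    rw [hja, ha]
    exact fun hh => hine hh
  obtain ⟨σ, hσ⟩ := s.2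
  refine ⟨⟨s.1 ∘ ⇑(Equiv.swap i j), σ * Equiv.swap i j, ?_⟩, ?_, ?_⟩
  · funext r
    simp [hσ, Equiv.Perm.mul_apply]
  · show (Finset.univ.filter fun r => s.1 r ≠ (s.1 ∘ ⇑(Equiv.swap i j)) r).card = 2
    have : (Finset.univ.filter fun r => s.1 r ≠ (s.1 ∘ ⇑(Equiv.swap i j)) r) = {i, j} := by
      ext r
      simp only [Finset.mem_filter, Finset.mem_univ, true_and, Function.comp_apply,
        Finset.mem_insert, Finset.mem_singleton]
      rcases eq_or_ne r i with rfl | hri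
      · simp [Equiv.swap_apply_left, hsij]
      rcases eq_or_ne r j with rfl | hrj
      · simp only [Equiv.swap_apply_right]
        constructor
        · intro _; right; trivial
        · intro _ hh; exact hsij hh.symm
      · simp [Equiv.swap_apply_of_ne_of_ne hri hrj, hri, hrj]
    rw [this]
    rw [Finset.card_insert_of_notMem (by simp [Ne.symm hji]), Finset.card_singleton]
  · apply Finset.card_lt_card
    rw [Finset.ssubset_iff_of_subset]
    · refine ⟨i, ?_, ?_⟩
      · simp [hine, hix]
        exact ⟨hine, hix⟩
      · simp only [Finset.mem_filter, Finset.mem_univ, true_and, Function.comp_apply,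
          Equiv.swap_apply_left, not_and]
        intro hcon
        rw [hja] at hcon
        exact (hcon ha).elim
    · intro r hr
      simp only [Finset.mem_filter, Finset.mem_univ, true_and, Function.comp_apply] at hr
      obtain ⟨hr1, hr2⟩ := hr
      simp only [Finset.mem_filter, Finset.mem_univ, true_and]
      refine ⟨?_, hr2⟩
      rcases eq_or_ne r i with rfl | hri
      · rw [Equiv.swap_apply_left, hja, ha] at hr1
        exact absurd rfl hr1
      rcases eq_or_ne r j with rfl | hrj
      · exact hjne
      · rw [Equiv.swap_apply_of_ne_of_ne hri hrj] at hr1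
        exact hr1

lemma walk_of_phi (x : X) : ∀ (m : ℕ) (s s' : CPVertex s₀),
    (Finset.univ.filter fun i => s.1 i ≠ s'.1 i ∧ s'.1 i ≠ x).card ≤ m →
    ∃ p : (cpGraph s₀).Walk s s', p.length ≤ m := by
  intro m
  induction m with
  | zero =>
    intro s s' h
    have := phi_zero_eq x s s' (Nat.le_zero.mp h)
    subst this
    exact ⟨SimpleGraph.Walk.nil, by simp⟩
  | succ m ih =>
    intro s s' h
    by_cases h0 : (Finset.univ.filter fun i => s.1 i ≠ s'.1 i ∧ s'.1 i ≠ x).card = 0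
    · have := phi_zero_eq x s s' h0
      subst this
      exact ⟨SimpleGraph.Walk.nil, by simp⟩
    · obtain ⟨t, hadj, hlt⟩ := phi_step x s s' h0
      obtain ⟨q, hq⟩ := ih t s' (by omega)
      exact ⟨SimpleGraph.Walk.cons hadj q, by simpa using Nat.succ_le_succ hq⟩

end Counting

lemma pow_eq_of_avoid (π' : Equiv.Perm (Fin n)) (a b i : Fin n)
    (ha : ¬ π'.SameCycle i a) (hb : ¬ π'.SameCycle i b) (k : ℕ) :
    ((Equiv.swap a b * π') ^ k) i = (π' ^ k) i := by
  induction k with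
  | zero => rfl
  | succ k ih =>
    rw [pow_succ', pow_succ', Equiv.Perm.mul_apply, Equiv.Perm.mul_apply, ih,
      Equiv.Perm.mul_apply]
    have hmem : π'.SameCycle i (π' ((π' ^ k) i)) := by
      refine Equiv.Perm.sameCycle_apply_right.mpr ?_
      exact (Equiv.Perm.sameCycle_pow_right).mpr (Equiv.Perm.SameCycle.refl _ _)
    have h1 : π' ((π' ^ k) i) ≠ a := fun hx => ha (hx ▸ hmem)
    have h2 : π' ((π' ^ k) i) ≠ b := fun hx => hb (hx ▸ hmem)
    rw [Equiv.swap_apply_of_ne_of_ne h1 h2]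

lemma key_swaps : ∀ (l : List (Equiv.Perm (Fin n))) (T : Finset (Fin n)),
    (∀ τ ∈ l, ∃ a b : Fin n, τ = Equiv.swap a b) →
    (∀ i : Fin n, ∃ t ∈ T, (l.prod).SameCycle i t) →
    n ≤ l.length + T.card := by
  intro l
  induction l with
  | nil =>
    intro T _ hT
    have hsub : (Finset.univ : Finset (Fin n)) ⊆ T := by
      intro i _
      obtain ⟨t, ht, hst⟩ := hT i
      rw [List.prod_nil, Equiv.Perm.sameCycle_one] at hst
      rwa [hst]
    have := Finset.card_le_card hsub
    simpa using this
  | cons τ l ih =>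
    intro T hsw hT
    obtain ⟨a, b, rfl⟩ := hsw τ List.mem_cons_self
    rw [List.prod_cons] at hT
    set π' := l.prod with hπ'
    have claim : (∀ i : Fin n, ∃ t ∈ insert a T, π'.SameCycle i t) ∨
        (∀ i : Fin n, ∃ t ∈ insert b T, π'.SameCycle i t) := by
      by_contra hcon
      push_neg at hcon
      obtain ⟨⟨i₁, h₁⟩, ⟨i₂, h₂⟩⟩ := hcon
      have h₁a : ¬ π'.SameCycle i₁ a := h₁ a (Finset.mem_insert_self _ _)
      have h₂b : ¬ π'.SameCycle i₂ b := h₂ b (Finset.mem_insert_self _ _)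
      by_cases hb1 : π'.SameCycle i₁ b
      · by_cases ha2 : π'.SameCycle i₂ a
        · obtain ⟨t, ht, hct⟩ := hT i₁
          obtain ⟨k, -, hk⟩ := hct.exists_pow_eq'
          have hU : ∀ m : ℕ, π'.SameCycle i₁ (((Equiv.swap a b * π') ^ m) i₁) ∨
              π'.SameCycle i₂ (((Equiv.swap a b * π') ^ m) i₁) := by
            intro m
            induction m with
            | zero => exact Or.inl (Equiv.Perm.SameCycle.refl _ _)
            | succ m ihm =>
              rw [pow_succ', Equiv.Perm.mul_apply, Equiv.Perm.mul_apply]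
              set y := ((Equiv.swap a b * π') ^ m) i₁ with hy
              have hy' : π'.SameCycle i₁ (π' y) ∨ π'.SameCycle i₂ (π' y) :=
                ihm.imp (fun h => Equiv.Perm.sameCycle_apply_right.mpr h)
                  (fun h => Equiv.Perm.sameCycle_apply_right.mpr h)
              by_cases hya : π' y = a
              · rw [hya, Equiv.swap_apply_left]
                exact Or.inl hb1
              by_cases hyb : π' y = b
              · rw [hyb, Equiv.swap_apply_right]
                exact Or.inr ha2
              · rw [Equiv.swap_apply_of_ne_of_ne hya hyb]
                exact hy'
          have := hU k
          rw [hk] at this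
          rcases this with h | h
          · exact h₁ t (Finset.mem_insert_of_mem ht) h
          · exact h₂ t (Finset.mem_insert_of_mem ht) h
        · obtain ⟨t, ht, hct⟩ := hT i₂
          obtain ⟨k, -, hk⟩ := hct.exists_pow_eq'
          rw [pow_eq_of_avoid π' a b i₂ ha2 h₂b k] at hk
          have : π'.SameCycle i₂ t := by
            rw [← hk]
            exact (Equiv.Perm.sameCycle_pow_right).mpr (Equiv.Perm.SameCycle.refl _ _)
          exact h₂ t (Finset.mem_insert_of_mem ht) this
      · obtain ⟨t, ht, hct⟩ := hT i₁
        obtain ⟨k, -, hk⟩ := hct.exists_pow_eq'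
        rw [pow_eq_of_avoid π' a b i₁ h₁a hb1 k] at hk
        have : π'.SameCycle i₁ t := by
          rw [← hk]
          exact (Equiv.Perm.sameCycle_pow_right).mpr (Equiv.Perm.SameCycle.refl _ _)
        exact h₁ t (Finset.mem_insert_of_mem ht) this
    have hlen : (Equiv.swap a b :: l).length = l.length + 1 := rfl
    rcases claim with h | h
    · have := ih (insert a T) (fun τ hτ => hsw τ (List.mem_cons_of_mem _ hτ)) h
      have hci := Finset.card_insert_le a T
      omega
    · have := ih (insert b T) (fun τ hτ => hsw τ (List.mem_cons_of_mem _ hτ)) h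
      have hci := Finset.card_insert_le b T
      omega

lemma orbit_meets (φ : X → ℕ) (x : X)
    (w : Fin n → X) (g : Fin n → Fin n) (π : Equiv.Perm (Fin n))
    (hstep : ∀ i, w (g i) = x ∨ φ (w i) < φ (w (g i)))
    (hπ : ∀ i, w (π i) = w (g i)) (i₀ : Fin n) :
    ∃ t, w t = x ∧ π.SameCycle i₀ t := by
  classical
  by_contra hcon
  push_neg at hcon
  set O := Finset.univ.filter (fun j => π.SameCycle i₀ j) with hO
  have hmemO : ∀ j, j ∈ O ↔ π.SameCycle i₀ j := by
    intro j; simp [hO]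
  have hπO : ∀ j ∈ O, π j ∈ O := by
    intro j hj
    rw [hmemO] at hj ⊢
    exact Equiv.Perm.sameCycle_apply_right.mpr hj
  have hsum : ∑ j ∈ O, φ (w (π j)) = ∑ j ∈ O, φ (w j) := by
    apply Finset.sum_bij (fun j _ => π j) hπO
    · intro a _ b _ h
      exact π.injective h
    · intro b hb
      refine ⟨π⁻¹ b, ?_, by simp⟩
      rw [hmemO] at hb ⊢
      exact Equiv.Perm.sameCycle_apply_right.mp (by simpa using hb)
    · intro a _
      rfl
  have hlt : ∀ j ∈ O, φ (w j) + 1 ≤ φ (w (π j)) := by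
    intro j hj
    have hx : w (π j) ≠ x := by
      intro hh
      exact hcon (π j) hh ((hmemO _).mp (hπO j hj))
    have := hstep j
    rw [← hπ j] at this
    rcases this with h | h
    · exact absurd h hx
    · omega
  have hge : ∑ j ∈ O, (φ (w j) + 1) ≤ ∑ j ∈ O, φ (w (π j)) := Finset.sum_le_sum hlt
  rw [Finset.sum_add_distrib, Finset.sum_const, smul_eq_mul, mul_one, hsum] at hge
  have hiO : i₀ ∈ O := (hmemO i₀).mpr (Equiv.Perm.SameCycle.refl _ _)
  have : 0 < O.card := Finset.card_pos.mpr ⟨i₀, hiO⟩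
  omega

end Aux

section Word

open Finset

variable {X : Type*} [Fintype X] [DecidableEq X]

noncomputable def letters (x : X) : List X := x :: (Finset.univ.erase x).toList

lemma letters_nodup (x : X) : (letters x).Nodup := by
  refine List.nodup_cons.mpr ⟨?_, Finset.nodup_toList _⟩
  simp [Finset.mem_toList]

lemma letters_mem (x y : X) : y ∈ letters x := by
  rcases eq_or_ne y x with rfl | h
  · exact List.mem_cons_self
  · exact List.mem_cons_of_mem _ (by simp [Finset.mem_toList, h])

lemma letters_toFinset (x : X) : (letters x).toFinset = Finset.univ :=
  Finset.eq_univ_iff_forall.mpr fun y => List.mem_toFinset.mpr (letters_mem x y)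

noncomputable def word (c : X → ℕ) (x : X) : List X :=
  (letters x).flatMap fun y => List.replicate (c y) y

lemma word_length (c : X → ℕ) (x : X) : (word c x).length = ∑ y, c y := by
  rw [word, List.length_flatMap]
  have h1 : (List.map (List.length ∘ fun y => List.replicate (c y) y) (letters x))
      = (letters x).map c := by
    apply List.map_congr_left
    intro a _
    simp
  rw [show List.map (fun a => (List.replicate (c a) a).length) (letters x) = (letters x).map c from h1,
    ← List.sum_toFinset _ (letters_nodup x), letters_toFinset]

lemma word_count (c : X → ℕ) (x : X) (y : X) : (word c x).count y = c y := by
  rw [word, List.count_flatMap]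
  have h1 : (List.map (List.count y ∘ fun y => List.replicate (c y) y) (letters x))
      = (letters x).map fun a => if a = y then c a else 0 := by
    apply List.map_congr_left
    intro a _
    simp only [Function.comp_apply, List.count_replicate]
    by_cases h : a = y <;> simp [h]
  rw [h1, ← List.sum_toFinset _ (letters_nodup x), letters_toFinset]
  simp

lemma card_filter_get (L : List X) (y : X) :
    (Finset.univ.filter fun i : Fin L.length => L.get i = y).card = L.count y := by
  induction L with
  | nil => simp
  | cons a L ih =>
    rw [Finset.card_filter]
    simp only [List.length_cons]
    rw [Fin.sum_univ_succ]
    have h2 : ∑ i : Fin L.length,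
        (if (a :: L).get i.succ = y then 1 else 0)
        = ∑ i : Fin L.length, (if L.get i = y then 1 else 0) := by
      apply Finset.sum_congr rfl
      intro i _
      simp
    rw [h2, ← Finset.card_filter, ih, List.count_cons]
    by_cases h : a = y <;> simp [h, add_comm]

lemma takeWhile_append_nodup {l₁ l₂ : List X} {y : X} (hy : y ∉ l₁) :
    ((l₁ ++ y :: l₂).takeWhile (fun z => z ≠ y)) = l₁ := by
  induction l₁ with
  | nil => simp [List.takeWhile]
  | cons a l ih =>
    have ha : a ≠ y := fun h => hy (h ▸ List.mem_cons_self)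
    have h2 : y ∉ l := fun h => hy (List.mem_cons_of_mem _ h)
    simp only [List.cons_append]
    rw [List.takeWhile_cons_of_pos (by simp [ha])]
    rw [ih h2]

lemma word_decomp (c : X → ℕ) : ∀ (l : List X) (t : ℕ)
    (h : t < (l.flatMap fun y => List.replicate (c y) y).length),
    ∃ l₁ y l₂, l = l₁ ++ y :: l₂ ∧
      (l₁.map c).sum ≤ t ∧ t < (l₁.map c).sum + c y ∧
      (l.flatMap fun y => List.replicate (c y) y).get ⟨t, h⟩ = y := by
  intro l
  induction l with
  | nil => intro t h; simp at h
  | cons a l ih =>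
    intro t h
    have hsplit : ((a :: l).flatMap fun y => List.replicate (c y) y)
        = List.replicate (c a) a ++ (l.flatMap fun y => List.replicate (c y) y) := by
      simp [List.flatMap_cons]
    by_cases ht : t < c a
    · refine ⟨[], a, l, rfl, by simp, by simpa using ht, ?_⟩
      have : ((a :: l).flatMap fun y => List.replicate (c y) y).get ⟨t, h⟩
          = (List.replicate (c a) a).get ⟨t, by simpa using ht⟩ := by
        simp only [List.get_eq_getElem]
        rw [List.getElem_of_eq hsplit, List.getElem_append_left (by simpa using ht)]
      rw [this]
      simp
    · push_neg at ht
      have hlen : t - c a < (l.flatMap fun y => List.replicate (c y) y).length := by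
        rw [hsplit] at h
        simp only [List.length_append, List.length_replicate] at h
        omega
      obtain ⟨l₁, y, l₂, hdec, hb1, hb2, hget⟩ := ih (t - c a) hlen
      refine ⟨a :: l₁, y, l₂, by rw [hdec]; rfl, ?_, ?_, ?_⟩
      · simp only [List.map_cons, List.sum_cons]
        omega
      · simp only [List.map_cons, List.sum_cons]
        omega
      · have : ((a :: l).flatMap fun y => List.replicate (c y) y).get ⟨t, h⟩
            = (l.flatMap fun y => List.replicate (c y) y).get ⟨t - c a, hlen⟩ := by
          simp only [List.get_eq_getElem]
          rw [List.getElem_of_eq hsplit,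
            List.getElem_append_right (by simpa using ht)]
          simp
        rw [this, hget]

noncomputable def phiW (c : X → ℕ) (x : X) (y : X) : ℕ :=
  (((letters x).takeWhile (fun z => z ≠ y)).map c).sum

lemma phiW_decomp {c : X → ℕ} {x y : X} {l₁ l₂ : List X} (hdec : letters x = l₁ ++ y :: l₂) :
    phiW c x y = (l₁.map c).sum := by
  have hnd := letters_nodup x
  rw [hdec, List.nodup_append] at hnd
  have hy : y ∉ l₁ := fun hmem => hnd.2.2 y hmem y List.mem_cons_self rfl
  rw [phiW, hdec, takeWhile_append_nodup hy]

lemma word_get_of_lt (c : X → ℕ) (x : X) (t : ℕ) (h : t < (word c x).length)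
    (ht : t < c x) : (word c x).get ⟨t, h⟩ = x := by
  have hsplit : word c x
      = List.replicate (c x) x ++ (((Finset.univ.erase x).toList).flatMap
        fun y => List.replicate (c y) y) := by
    rw [word, letters, List.flatMap_cons]
  simp only [List.get_eq_getElem]
  rw [List.getElem_of_eq hsplit, List.getElem_append_left (by simpa using ht)]
  simp

lemma word_phi_lt (c : X → ℕ) (x : X) (hmax : ∀ y, c y ≤ c x) (t t' : ℕ)
    (h : t < (word c x).length) (h' : t' < (word c x).length) (ht' : t' = t + c x) :
    phiW c x ((word c x).get ⟨t, h⟩) < phiW c x ((word c x).get ⟨t', h'⟩) := by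
  have h2 : t < ((letters x).flatMap fun y => List.replicate (c y) y).length := h
  have h2' : t' < ((letters x).flatMap fun y => List.replicate (c y) y).length := h'
  obtain ⟨l₁, y, l₂, hdec, hb1, hb2, hget⟩ := word_decomp c (letters x) t h2
  obtain ⟨l₁', y', l₂', hdec', hb1', hb2', hget'⟩ := word_decomp c (letters x) t' h2'
  have e1 : (word c x).get ⟨t, h⟩ = y := hget
  have e1' : (word c x).get ⟨t', h'⟩ = y' := hget'
  rw [e1, e1', phiW_decomp hdec, phiW_decomp hdec']
  have hy' : c y' ≤ c x := hmax y'
  omega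

end Word

/-- The diameter of the constrained permutation graph on `s₀ : Fin n → X` (with
`n ≥ 1`) equals `n - max_x c_x`, where `c_x` is the number of coordinates of `s₀`
holding the value `x`: every rearrangement of `s₀` can be reached from any other by at
most `n - max_x c_x` swaps of unequal entries, and this bound is attained. -/
theorem cpGraph_diam {n : ℕ} {X : Type*} [Fintype X] [DecidableEq X]
    (s₀ : Fin n → X) (hn : 1 ≤ n) (c : X → ℕ)
    (hc : ∀ x : X, c x = (Finset.univ.filter fun i : Fin n => s₀ i = x).card) :
    (cpGraph s₀).diam = n - Finset.univ.sup c ∧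
      (∀ s s' : CPVertex s₀, (cpGraph s₀).dist s s' ≤ n - Finset.univ.sup c) ∧
      (∃ s s' : CPVertex s₀, (cpGraph s₀).dist s s' = n - Finset.univ.sup c) := by
  classical
  haveI : NeZero n := ⟨by omega⟩
  haveI : Nonempty X := ⟨s₀ ⟨0, hn⟩⟩
  obtain ⟨x, -, hxM⟩ := Finset.exists_mem_eq_sup (Finset.univ : Finset X)
    Finset.univ_nonempty c
  have hmax : ∀ y, c y ≤ c x := fun y => by
    rw [← hxM]; exact Finset.le_sup (Finset.mem_univ y)
  rw [hxM]
  have hcxn : c x ≤ n := by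
    rw [hc x]
    calc (Finset.univ.filter fun i : Fin n => s₀ i = x).card
        ≤ (Finset.univ : Finset (Fin n)).card := Finset.card_filter_le _ _
      _ = n := by simp
  have hsum : ∑ y, c y = n := by
    have h1 : (Finset.univ : Finset (Fin n)).card
        = ∑ y : X, (Finset.univ.filter fun i : Fin n => s₀ i = y).card :=
      Finset.card_eq_sum_card_fiberwise (fun i _ => Finset.mem_univ (s₀ i))
    have h2 : ∑ y : X, c y
        = ∑ y : X, (Finset.univ.filter fun i : Fin n => s₀ i = y).card :=
      Finset.sum_congr rfl fun y _ => hc y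
    rw [h2, ← h1]
    simp
  -- upper bound via the potential argument
  have hub : ∀ s s' : CPVertex s₀, ∃ p : (cpGraph s₀).Walk s s', p.length ≤ n - c x := by
    intro s s'
    apply walk_of_phi x
    calc (Finset.univ.filter fun i => s.1 i ≠ s'.1 i ∧ s'.1 i ≠ x).card
        ≤ (Finset.univ.filter fun i => s'.1 i ≠ x).card := by
          apply Finset.card_le_card
          intro i hi
          simp only [Finset.mem_filter] at hi ⊢
          exact ⟨hi.1, hi.2.2⟩
      _ = n - c x := by
          have h2 : (Finset.univ.filter fun i => ¬ s'.1 i = x)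
              = Finset.univ \ (Finset.univ.filter fun i => s'.1 i = x) :=
            Finset.filter_not _ _
          rw [h2, Finset.card_sdiff_of_subset (Finset.filter_subset _ _), count_vertex s' x, ← hc x]
          simp
  have hdist_le : ∀ s s' : CPVertex s₀, (cpGraph s₀).dist s s' ≤ n - c x := by
    intro s s'
    obtain ⟨p, hp⟩ := hub s s'
    exact le_trans (SimpleGraph.dist_le p) hp
  -- the extremal pair
  have hpair : ∃ s s' : CPVertex s₀, (cpGraph s₀).dist s s' = n - c x := by
    rcases eq_or_lt_of_le hcxn with heq | hlt
    · refine ⟨⟨s₀, 1, by funext i; simp⟩, ⟨s₀, 1, by funext i; simp⟩, ?_⟩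
      rw [SimpleGraph.dist_self, heq]
      omega
    · -- the word construction
      have hlen : (word c x).length = n := by rw [word_length, hsum]
      set w : Fin n → X := fun i => (word c x).get (Fin.cast hlen.symm i) with hw
      have hwget : ∀ (t : Fin n),
          w t = (word c x).get ⟨(t : ℕ), by rw [hlen]; exact t.isLt⟩ := fun t => rfl
      have hwcount : ∀ y, (Finset.univ.filter fun i => w i = y).card = c y := by
        intro y
        have hbij : (Finset.univ.filter fun i : Fin n => w i = y).card
            = (Finset.univ.filter fun i : Fin (word c x).length
                => (word c x).get i = y).card := by
          apply Finset.card_bij (fun i _ => Fin.cast hlen.symm i)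
          · intro a ha
            simp only [Finset.mem_filter, Finset.mem_univ, true_and] at ha ⊢
            exact ha
          · intro a _ b _ hab
            exact Fin.cast_injective _ hab
          · intro b hb
            simp only [Finset.mem_filter, Finset.mem_univ, true_and] at hb
            refine ⟨Fin.cast hlen b, ?_, by ext; simp⟩
            simp only [Finset.mem_filter, Finset.mem_univ, true_and]
            rw [hwget]
            exact hb
        rw [hbij, card_filter_get, word_count]
      obtain ⟨σ, hσ⟩ := exists_perm_of_count_eq
        (u := w) (v := s₀) (fun y => by rw [hwcount y, hc y])
      set Mf : Fin n := ⟨c x, hlt⟩ with hMf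
      set g : Fin n → Fin n := fun i => i + Mf with hg
      have hstep : ∀ i : Fin n, w (g i) = x ∨ phiW c x (w i) < phiW c x (w (g i)) := by
        intro i
        have hval : ((g i : Fin n) : ℕ) = ((i : ℕ) + c x) % n := by
          simp [hg, Fin.val_add, hMf]
        by_cases hcase : (i : ℕ) + c x < n
        · right
          have hv2 : ((g i : Fin n) : ℕ) = (i : ℕ) + c x := by
            rw [hval, Nat.mod_eq_of_lt hcase]
          rw [hwget i, hwget (g i)]
          have := word_phi_lt c x hmax (i : ℕ) ((g i : Fin n) : ℕ)
            (by rw [hlen]; exact i.isLt) (by rw [hlen]; exact (g i).isLt) (by omega)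
          exact this
        · left
          push_neg at hcase
          have hin : (i : ℕ) < n := i.isLt
          have hv2 : ((g i : Fin n) : ℕ) = (i : ℕ) + c x - n := by
            rw [hval]
            have : (i : ℕ) + c x - n < n := by omega
            rw [Nat.mod_eq_sub_mod hcase, Nat.mod_eq_of_lt this]
          rw [hwget (g i)]
          apply word_get_of_lt
          omega
      set sv : CPVertex s₀ := ⟨w, σ, hσ⟩ with hsv
      set s'v : CPVertex s₀ := ⟨fun i => w (g i), σ * Equiv.addRight Mf, by
        funext i
        simp only [hg, hσ, Function.comp_apply, Equiv.Perm.mul_apply]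
        rfl⟩ with hs'v
      refine ⟨sv, s'v, le_antisymm (hdist_le sv s'v) ?_⟩
      have hreach : (cpGraph s₀).Reachable s'v sv := by
        obtain ⟨p, -⟩ := hub s'v sv
        exact ⟨p⟩
      obtain ⟨p, hp⟩ := hreach.exists_walk_length_eq_dist
      obtain ⟨l, hswaps, hlen2, hcomp⟩ := walk_to_swaps p
      have hπ : ∀ i, w (l.prod i) = w (g i) := by
        intro i
        have h1 : s'v.1 i = sv.1 (l.prod i) := congrFun hcomp i
        exact h1.symm
      have hT : ∀ i : Fin n, ∃ t ∈ (Finset.univ.filter fun t => w t = x),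
          (l.prod).SameCycle i t := by
        intro i
        obtain ⟨t, htx, hsc⟩ := orbit_meets (phiW c x) x w g l.prod hstep hπ i
        exact ⟨t, by simp [htx], hsc⟩
      have hkey := key_swaps l _ hswaps hT
      have hTcard : (Finset.univ.filter fun t => w t = x).card = c x := hwcount x
      rw [hlen2, hp, hTcard] at hkey
      have hcomm : (cpGraph s₀).dist s'v sv = (cpGraph s₀).dist sv s'v :=
        SimpleGraph.dist_comm
      omega
  refine ⟨?_, hdist_le, hpair⟩
  -- computing the diameter
  obtain ⟨s, s', hpval⟩ := hpair
  have hediam_le : (cpGraph s₀).ediam ≤ ((n - c x : ℕ) : ℕ∞) := by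
    apply SimpleGraph.ediam_le_of_edist_le
    intro u v
    obtain ⟨p, hp⟩ := hub u v
    exact le_trans (SimpleGraph.edist_le p) (by exact_mod_cast hp)
  have hne : (cpGraph s₀).edist s s' ≠ ⊤ := by
    intro h
    have := le_trans (SimpleGraph.edist_le_ediam (u := s) (v := s')) hediam_le
    rw [h] at this
    exact absurd this (by simp)
  have hedist : (cpGraph s₀).edist s s' = ((n - c x : ℕ) : ℕ∞) := by
    have h1 : ((cpGraph s₀).edist s s').toNat = n - c x := hpval
    rw [← h1, ENat.coe_toNat hne]
  have hediam_ge : ((n - c x : ℕ) : ℕ∞) ≤ (cpGraph s₀).ediam :=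
    hedist ▸ SimpleGraph.edist_le_ediam
  have hediam : (cpGraph s₀).ediam = ((n - c x : ℕ) : ℕ∞) :=
    le_antisymm hediam_le hediam_ge
  rw [SimpleGraph.diam, hediam]
  exact ENat.toNat_coe _
end

section
/- Let N ≥ 1 and let k : Fin N → Fin K assign each index to a block, with block sizes n_b = |k⁻¹(b)|. Let L_N = N·I − J be the Laplacian of the complete graph on N vertices, L_blk the block Laplacian of the disjoint union of complete graphs on the blocks, and L_part = L_N − L_blk the Laplacian of the complete multipartite graph whose parts are the blocks. Then for every t ∈ ℝ, the continuous-time quantum walk on L_part factorizes exactly as exp(−i t L_part) = exp(−i t L_N) · exp(i t L_blk). -/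
open NormedSpace in
/-- Let `k : Fin N → Fin K` assign each index to a block, `L_N = N•I - J` the
Laplacian of the complete graph, `L_blk` the block Laplacian of the disjoint union of
complete graphs on the blocks, and `L_part = L_N - L_blk` the Laplacian of the
complete multipartite graph with parts the blocks.  Then for every `t : ℝ` the
continuous-time quantum walk on `L_part` factorises exactly as
`exp (-i t L_part) = exp (-i t L_N) * exp (i t L_blk)`. -/
theorem ctqw_multipartite_laplacian_factorization
    (N K : ℕ) (hN : 1 ≤ N) (k : Fin N → Fin K)
    (LN Lblk : Matrix (Fin N) (Fin N) ℂ)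
    (hLN : LN = (N : ℂ) • (1 : Matrix (Fin N) (Fin N) ℂ) -
      Matrix.of (fun _ _ => (1 : ℂ)))
    (hLblk : Lblk = Matrix.of (fun i j : Fin N =>
      if i = j then
        ((Finset.univ.filter fun i' : Fin N => k i' = k i).card : ℂ) - 1
      else if k i = k j then (-1 : ℂ) else 0))
    (t : ℝ) :
    exp ((-(Complex.I * (t : ℂ))) • (LN - Lblk)) =
      exp ((-(Complex.I * (t : ℂ))) • LN) * exp ((Complex.I * (t : ℂ)) • Lblk) := by
  -- row and column sums of Lblk vanish
  have hsum : ∀ j : Fin N, ∑ l : Fin N,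
      (if l = j then
        ((Finset.univ.filter fun i' : Fin N => k i' = k j).card : ℂ) - 1
      else if k l = k j then (-1 : ℂ) else 0) = 0 := by
    intro j
    have : ∀ l : Fin N,
        (if l = j then
          ((Finset.univ.filter fun i' : Fin N => k i' = k j).card : ℂ) - 1
        else if k l = k j then (-1 : ℂ) else 0)
        = (if k l = k j then (-1 : ℂ) else 0)
          + (if l = j then ((Finset.univ.filter fun i' : Fin N => k i' = k j).card : ℂ) else 0) := by
      intro l
      by_cases h : l = j
      · subst h; simp [sub_eq_neg_add]
      · simp [h]
    simp only [this, Finset.sum_add_distrib]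
    rw [Finset.sum_ite_eq' Finset.univ j]
    simp [Finset.sum_ite_eq, Finset.sum_boole, neg_add_eq_zero]
    rw [← Finset.sum_filter]
    simp
  -- J * Lblk = 0 and Lblk * J = 0
  have hJL : Matrix.of (fun _ _ => (1 : ℂ)) * Lblk = 0 := by
    ext i j
    simp only [Matrix.mul_apply, hLblk, Matrix.of_apply, Matrix.zero_apply, one_mul]
    refine Eq.trans ?_ (hsum j)
    apply Finset.sum_congr rfl; intro l _
    by_cases h : l = j
    · subst h; simp
    · simp [h]
  have hLJ : Lblk * Matrix.of (fun _ _ => (1 : ℂ)) = 0 := by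
    ext i j
    simp only [Matrix.mul_apply, hLblk, Matrix.of_apply, Matrix.zero_apply, mul_one]
    have := hsum i
    calc ∑ l : Fin N, (if i = l then
          ((Finset.univ.filter fun i' : Fin N => k i' = k i).card : ℂ) - 1
        else if k i = k l then (-1 : ℂ) else 0)
        = ∑ l : Fin N, (if l = i then
          ((Finset.univ.filter fun i' : Fin N => k i' = k i).card : ℂ) - 1
        else if k l = k i then (-1 : ℂ) else 0) := by
          apply Finset.sum_congr rfl; intro l _
          simp [eq_comm]
      _ = 0 := hsum i
  have hcomm : Commute LN Lblk := by
    unfold Commute SemiconjBy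
    rw [hLN, sub_mul, mul_sub, Matrix.smul_mul, Matrix.mul_smul, Matrix.one_mul,
      Matrix.mul_one, hJL, hLJ]
  have h1 : (-(Complex.I * (t : ℂ))) • (LN - Lblk)
      = (-(Complex.I * (t : ℂ))) • LN + (Complex.I * (t : ℂ)) • Lblk := by
    module
  rw [h1]
  exact Matrix.exp_add_of_commute (𝔸 := ℂ) _ _ ((hcomm.smul_left _).smul_right _)
end
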